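/- Let m₀, i, m₁ : ℝ → ℝ → ℝ be continuous (m₁ independent of disease duration) with i ≥ 0, and let S₀ : ℝ → ℝ be continuous with S₀ > 0. Define S(t,a) := S₀(t−a)·exp(−∫₀ᵃ (m₀(t−a+τ,τ) + i(t−a+τ,τ)) dτ), C⋆(t,a) := ∫₀ᵃ i(t−δ, a−δ)·S(t−δ, a−δ)·exp(−∫₀^δ m₁(t−δ+τ, a−δ+τ) dτ) dδ, and the prevalence p(t,a) := C⋆(t,a)/(C⋆(t,a) + S(t,a)). Then for every t ∈ ℝ and a > 0, the function s ↦ p(t+s, a+s) has derivative (1 − p(t,a))·(i(t,a) − p(t,a)·(m₁(t,a) − m₀(t,a))) at s = 0. (The partial differential equation (∂ₜ+∂ₐ)p = (1−p)·(i − p·(m₁−m₀)) for the age-specific prevalence.) -/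

import Mathlib

/-!
Along a characteristic `u ↦ (c + u, u)` the susceptibles solve `S' = -(m₀ + i) S` and the
diseased solve `C' = i S - m₁ C`; the latter is Duhamel's formula, read off after writing `C⋆`
as `exp (-M y) * ∫₀ʸ i S exp M` with `M` a primitive of `m₁` along the characteristic. The quotient rule applied to
`p = C / (C + S)` then gives the Riccati-type equation for the prevalence.
-/

open Real intervalIntegral

theorem hasDerivAt_prevalence {C S : ℝ → ℝ} {x ι μ₀ μ₁ : ℝ}
    (hS : HasDerivAt S (-(μ₀ + ι) * S x) x) (hC : HasDerivAt C (ι * S x - μ₁ * C x) x)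
    (hCS : C x + S x ≠ 0) :
    HasDerivAt (fun y => C y / (C y + S y))
      ((1 - C x / (C x + S x)) * (ι - C x / (C x + S x) * (μ₁ - μ₀))) x := by
  refine (hC.div (hC.add hS) hCS).congr_deriv ?_
  simp only [Pi.add_apply]
  field_simp
  ring

theorem hasDerivAt_exp_neg_integral {h : ℝ → ℝ} (hh : Continuous h) (x : ℝ) :
    HasDerivAt (fun y => exp (-∫ u in (0 : ℝ)..y, h u))
      (-h x * exp (-∫ u in (0 : ℝ)..x, h u)) x := by
  refine ((hh.integral_hasStrictDerivAt 0 x).hasDerivAt.neg.exp).congr_deriv ?_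
  simp only [Pi.neg_apply]
  ring

theorem integral_comp_sub_add_eq_sub {h : ℝ → ℝ} (hh : Continuous h) (y δ : ℝ) :
    ∫ τ in (0 : ℝ)..δ, h (y - δ + τ) =
      (∫ u in (0 : ℝ)..y, h u) - ∫ u in (0 : ℝ)..(y - δ), h u := by
  rw [integral_comp_add_left h, integral_interval_sub_left (hh.intervalIntegrable _ _)
    (hh.intervalIntegrable _ _)]
  simp

theorem integral_duhamel_eq {g h : ℝ → ℝ} (hh : Continuous h) (y : ℝ) :
    ∫ δ in (0 : ℝ)..y, g (y - δ) * exp (-∫ τ in (0 : ℝ)..δ, h (y - δ + τ)) =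
      exp (-∫ u in (0 : ℝ)..y, h u) *
        ∫ σ in (0 : ℝ)..y, g σ * exp (∫ u in (0 : ℝ)..σ, h u) := by
  have hsplit : ∀ δ, g (y - δ) * exp (-∫ τ in (0 : ℝ)..δ, h (y - δ + τ)) =
      exp (-∫ u in (0 : ℝ)..y, h u) * (g (y - δ) * exp (∫ u in (0 : ℝ)..(y - δ), h u)) := by
    intro δ
    rw [integral_comp_sub_add_eq_sub hh, neg_sub, exp_sub, exp_neg, div_eq_mul_inv]
    ring
  simp_rw [hsplit, integral_const_mul,
    integral_comp_sub_left (fun σ => g σ * exp (∫ u in (0 : ℝ)..σ, h u)), sub_self, sub_zero]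

theorem hasDerivAt_integral_duhamel {g h : ℝ → ℝ} (hg : Continuous g) (hh : Continuous h)
    (x : ℝ) :
    HasDerivAt
      (fun y => ∫ δ in (0 : ℝ)..y, g (y - δ) * exp (-∫ τ in (0 : ℝ)..δ, h (y - δ + τ)))
      (g x - h x *
        ∫ δ in (0 : ℝ)..x, g (x - δ) * exp (-∫ τ in (0 : ℝ)..δ, h (x - δ + τ))) x := by
  have hφ : Continuous fun σ => g σ * exp (∫ u in (0 : ℝ)..σ, h u) :=
    hg.mul (continuous_primitive (fun _ _ => hh.intervalIntegrable _ _) 0).rexp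
  simp_rw [integral_duhamel_eq hh]
  refine ((hasDerivAt_exp_neg_integral hh x).mul
    (hφ.integral_hasStrictDerivAt 0 x).hasDerivAt).congr_deriv ?_
  have hexp : exp (-∫ u in (0 : ℝ)..x, h u) * exp (∫ u in (0 : ℝ)..x, h u) = 1 := by
    rw [← exp_add, neg_add_cancel, exp_zero]
  linear_combination g x * hexp

theorem keiding_prevalence_pde_general
    (m₀ i m₁ : ℝ → ℝ → ℝ)
    (hm₀ : Continuous fun q : ℝ × ℝ => m₀ q.1 q.2)
    (hi : Continuous fun q : ℝ × ℝ => i q.1 q.2)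
    (hi_nonneg : ∀ t a : ℝ, 0 ≤ i t a)
    (hm₁ : Continuous fun q : ℝ × ℝ => m₁ q.1 q.2)
    (S₀ : ℝ → ℝ) (hS₀_pos : ∀ u : ℝ, 0 < S₀ u)
    (S : ℝ → ℝ → ℝ)
    (hS : ∀ t a : ℝ, S t a = S₀ (t - a) *
      Real.exp (-∫ τ in (0:ℝ)..a, (m₀ (t - a + τ) τ + i (t - a + τ) τ)))
    (Cstar : ℝ → ℝ → ℝ)
    (hCstar : ∀ t a : ℝ, Cstar t a =
      ∫ δ in (0:ℝ)..a, i (t - δ) (a - δ) * S (t - δ) (a - δ) *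
        Real.exp (-∫ τ in (0:ℝ)..δ, m₁ (t - δ + τ) (a - δ + τ)))
    (p : ℝ → ℝ → ℝ)
    (hp : ∀ t a : ℝ, p t a = Cstar t a / (Cstar t a + S t a)) :
    ∀ t a : ℝ, 0 < a →
      HasDerivAt (fun s : ℝ => p (t + s) (a + s))
        ((1 - p t a) * (i t a - p t a * (m₁ t a - m₀ t a))) 0 := by
  intro t a ha
  obtain ⟨c, rfl⟩ : ∃ c, t = c + a := ⟨t - a, by ring⟩
  have hdiag : Continuous fun u : ℝ => ((c + u, u) : ℝ × ℝ) := by fun_prop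
  have hS_pos : ∀ u v, 0 < S u v := fun u v => by
    rw [hS]
    exact mul_pos (hS₀_pos _) (exp_pos _)
  have hSchar : ∀ y, HasDerivAt (fun y => S (c + y) y)
      (-(m₀ (c + y) y + i (c + y) y) * S (c + y) y) y := by
    intro y
    simp only [hS, add_sub_cancel_right]
    have hexit : Continuous fun u => m₀ (c + u) u + i (c + u) u :=
      (hm₀.comp hdiag).add (hi.comp hdiag)
    exact ((hasDerivAt_exp_neg_integral hexit y).const_mul (S₀ c)).congr_deriv (by ring)
  have hCchar : ∀ y, HasDerivAt (fun y => Cstar (c + y) y)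
      (i (c + y) y * S (c + y) y - m₁ (c + y) y * Cstar (c + y) y) y := by
    intro y
    simp only [hCstar, add_sub_assoc, add_assoc]
    exact hasDerivAt_integral_duhamel ((hi.comp hdiag).mul
      (continuous_iff_continuousAt.2 fun y => (hSchar y).continuousAt)) (hm₁.comp hdiag) y
  have hC_nonneg : 0 ≤ Cstar (c + a) a := by
    rw [hCstar]
    exact integral_nonneg ha.le fun δ _ =>
      mul_nonneg (mul_nonneg (hi_nonneg _ _) (hS_pos _ _).le) (exp_pos _).le
  have hp_char := hasDerivAt_prevalence (hSchar a) (hCchar a)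
    (add_pos_of_nonneg_of_pos hC_nonneg (hS_pos _ _)).ne'
  simpa only [hp, add_assoc] using HasDerivAt.comp_const_add a 0 (by rwa [add_zero])

/-- PDE for the age-specific prevalence in the duration-independent case:
`(∂ₜ+∂ₐ) p = (1 − p)·(i − p·(m₁ − m₀))`. -/
theorem keiding_prevalence_pde
    (m₀ i m₁ : ℝ → ℝ → ℝ)
    (hm₀ : Continuous fun q : ℝ × ℝ => m₀ q.1 q.2)
    (hi : Continuous fun q : ℝ × ℝ => i q.1 q.2)
    (hi_nonneg : ∀ t a : ℝ, 0 ≤ i t a)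
    (hm₁ : Continuous fun q : ℝ × ℝ => m₁ q.1 q.2)
    (S₀ : ℝ → ℝ) (hS₀ : Continuous S₀) (hS₀_pos : ∀ u : ℝ, 0 < S₀ u)
    (S : ℝ → ℝ → ℝ)
    (hS : ∀ t a : ℝ, S t a = S₀ (t - a) *
      Real.exp (-∫ τ in (0:ℝ)..a, (m₀ (t - a + τ) τ + i (t - a + τ) τ)))
    (Cstar : ℝ → ℝ → ℝ)
    (hCstar : ∀ t a : ℝ, Cstar t a =
      ∫ δ in (0:ℝ)..a, i (t - δ) (a - δ) * S (t - δ) (a - δ) *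
        Real.exp (-∫ τ in (0:ℝ)..δ, m₁ (t - δ + τ) (a - δ + τ)))
    (p : ℝ → ℝ → ℝ)
    (hp : ∀ t a : ℝ, p t a = Cstar t a / (Cstar t a + S t a)) :
    ∀ t a : ℝ, 0 < a →
      HasDerivAt (fun s : ℝ => p (t + s) (a + s))
        ((1 - p t a) * (i t a - p t a * (m₁ t a - m₀ t a))) 0 :=
  keiding_prevalence_pde_general m₀ i m₁ hm₀ hi hi_nonneg hm₁ S₀ hS₀_pos S hS Cstar hCstar p hp
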